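/- arXiv:math/0608042 — 2 statements merged into one kernel-verified Lean document; each statement's English description precedes it below -/
import Mathlib

section
/- Let α > 1 be a real number and β ∈ ℝ. An integer m has the form m = ⌊α n + β⌋ for some integer n if and only if 0 < {α^{-1}(m − β + 1)} ≤ α^{-1}. Moreover, when this holds, the integer n with m = ⌊α n + β⌋ is uniquely determined by m. -/
/-!
Put `x = α⁻¹ (m - β + 1)`. Unfolding the floor, `m = ⌊α n + β⌋` says exactly that
`n < x ≤ n + α⁻¹`. Since `α⁻¹ < 1`, the only integer that can satisfy this is `n = ⌊x⌋`,
and it does so precisely when `0 < {x} ≤ α⁻¹`. This gives both the criterion and uniqueness.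
-/

theorem Int.lt_and_le_add_iff_floor_eq {R : Type*} [Ring R] [LinearOrder R] [IsStrictOrderedRing R]
    [FloorRing R] {x c : R} {n : ℤ} (hc : c < 1) :
    ((n : R) < x ∧ x ≤ n + c) ↔ ⌊x⌋ = n ∧ 0 < Int.fract x ∧ Int.fract x ≤ c := by
  constructor
  · rintro ⟨hnx, hxc⟩
    have hfloor : ⌊x⌋ = n := Int.floor_eq_iff.mpr ⟨hnx.le, hxc.trans_lt (by gcongr)⟩
    rw [Int.fract, hfloor]
    exact ⟨rfl, sub_pos.mpr hnx, sub_le_iff_le_add'.mpr hxc⟩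
  · rintro ⟨rfl, hpos, hle⟩
    exact ⟨sub_pos.mp hpos, sub_le_iff_le_add'.mp hle⟩

theorem eq_floor_mul_add_iff {α β : ℝ} (hα : 0 < α) (m n : ℤ) :
    m = ⌊α * n + β⌋ ↔ (n : ℝ) < α⁻¹ * (m - β + 1) ∧ α⁻¹ * (m - β + 1) ≤ n + α⁻¹ := by
  have hx : α⁻¹ * (m - β + 1) = α⁻¹ * (m - β) + α⁻¹ := by ring
  rw [eq_comm, Int.floor_eq_iff, lt_inv_mul_iff₀ hα, hx, add_le_add_iff_right,
    inv_mul_le_iff₀ hα]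
  constructor <;> rintro ⟨h₁, h₂⟩ <;> constructor <;> linarith

theorem eq_floor_mul_add_iff_floor_eq {α β : ℝ} (hα : 1 < α) (m n : ℤ) :
    m = ⌊α * n + β⌋ ↔ ⌊α⁻¹ * (m - β + 1)⌋ = n ∧
      0 < Int.fract (α⁻¹ * (m - β + 1)) ∧ Int.fract (α⁻¹ * (m - β + 1)) ≤ α⁻¹ := by
  rw [eq_floor_mul_add_iff (by linarith) m n]
  exact Int.lt_and_le_add_iff_floor_eq (inv_lt_one_of_one_lt₀ hα)

/-- For `α > 1`, an integer `m` has the form `m = ⌊α n + β⌋` for some integer `n` if and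
only if `0 < {α⁻¹(m − β + 1)} ≤ α⁻¹`; moreover, such `n` is uniquely determined by `m`. -/
theorem beatty_values (α β : ℝ) (hα : 1 < α) (m : ℤ) :
    ((∃ n : ℤ, m = ⌊α * n + β⌋) ↔
      (0 < Int.fract (α⁻¹ * (m - β + 1)) ∧ Int.fract (α⁻¹ * (m - β + 1)) ≤ α⁻¹)) ∧
    (∀ n₁ n₂ : ℤ, m = ⌊α * n₁ + β⌋ → m = ⌊α * n₂ + β⌋ → n₁ = n₂) := by
  simp only [eq_floor_mul_add_iff_floor_eq hα]
  refine ⟨⟨fun ⟨_, _, h⟩ => h, fun h => ⟨_, rfl, h⟩⟩, ?_⟩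
  rintro n₁ n₂ ⟨rfl, -⟩ ⟨h, -⟩
  exact h
end

section
/- Let α > 1 be irrational, β ∈ ℝ, k a positive integer, χ a Dirichlet character modulo k, and N a positive integer. Put γ = α^{-1}, δ = α^{-1}(1 − β), M_0 = ⌊α + β − 1⌋, and M = ⌊α N + β⌋. Then ∑_{n=1}^{N} χ(⌊α n + β⌋) = ∑_{M_0 < m ≤ M, 0 < {γ m + δ} ≤ γ} χ(m), i.e., the character sum along the Beatty sequence equals the sum of χ(m) over those integers m in (M_0, M] whose fractional part {γ m + δ} lies in the interval (0, γ]. -/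
/-!
`m = ⌊α n + β⌋` means `m ≤ α n + β < m + 1`, i.e. `γ m + δ - γ ≤ n < γ m + δ` with `γ = α⁻¹`,
`δ = α⁻¹ (1 - β)`. Since `γ < 1`, such an integer `n` exists exactly when `0 < {γ m + δ} ≤ γ`, and
then `n = ⌊γ m + δ⌋`. As `α ≥ 1`, the map `n ↦ ⌊α n + β⌋` is strictly increasing, so it is a
bijection from `[1, N]` onto the Beatty values in `(⌊α + β⌋ - 1, ⌊α N + β⌋]`.
-/

lemma strictMono_floor_mul_add {α : ℝ} (hα : 1 ≤ α) (β : ℝ) :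
    StrictMono fun n : ℤ => ⌊α * n + β⌋ := by
  refine strictMono_int_of_lt_succ fun n => ?_
  calc ⌊α * n + β⌋ < ⌊α * n + β⌋ + 1 := lt_add_one _
    _ = ⌊α * n + β + 1⌋ := (Int.floor_add_one _).symm
    _ ≤ ⌊α * ↑(n + 1) + β⌋ := Int.floor_mono (by push_cast; linarith)

lemma floor_mul_add_eq_iff {α : ℝ} (hα : 0 < α) (β x : ℝ) (m : ℤ) :
    ⌊α * x + β⌋ = m ↔ x ∈ Set.Ico (α⁻¹ * m + α⁻¹ * (1 - β) - α⁻¹) (α⁻¹ * m + α⁻¹ * (1 - β)) := by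
  have hlow : α⁻¹ * m + α⁻¹ * (1 - β) - α⁻¹ = (m - β) / α := by field_simp; ring
  have hhigh : α⁻¹ * m + α⁻¹ * (1 - β) = (m + 1 - β) / α := by field_simp; ring
  rw [Int.floor_eq_iff, Set.mem_Ico, hlow, hhigh, div_le_iff₀ hα, lt_div_iff₀ hα]
  constructor <;> rintro ⟨h, h'⟩ <;> constructor <;> linarith

lemma exists_intCast_mem_Ico_sub_iff_fract_mem_Ioc {γ : ℝ} (hγ : γ < 1) (y : ℝ) :
    (∃ n : ℤ, (n : ℝ) ∈ Set.Ico (y - γ) y) ↔ Int.fract y ∈ Set.Ioc 0 γ := by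
  simp only [Set.mem_Ico, Set.mem_Ioc, Int.fract]
  constructor
  · rintro ⟨n, hle, hlt⟩
    rw [Int.floor_eq_iff.2 ⟨hlt.le, by linarith⟩]
    constructor <;> linarith
  · rintro ⟨hpos, hle⟩
    exact ⟨⌊y⌋, by linarith, by linarith⟩

lemma exists_floor_mul_add_eq_iff {α : ℝ} (hα : 1 < α) (β : ℝ) (m : ℤ) :
    (∃ n : ℤ, ⌊α * n + β⌋ = m) ↔
      Int.fract (α⁻¹ * m + α⁻¹ * (1 - β)) ∈ Set.Ioc 0 α⁻¹ := by
  simp only [floor_mul_add_eq_iff (zero_lt_one.trans hα)]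
  exact exists_intCast_mem_Ico_sub_iff_fract_mem_Ioc (inv_lt_one_of_one_lt₀ hα) _

lemma floor_mul_add_mem_Ioc_iff {α : ℝ} (hα : 1 ≤ α) (β : ℝ) (N : ℕ) (n : ℤ) :
    ⌊α * n + β⌋ ∈ Finset.Ioc ⌊α + β - 1⌋ ⌊α * N + β⌋ ↔ n ∈ Finset.Icc 1 (N : ℤ) := by
  have hmono := strictMono_floor_mul_add hα β
  have hM₀ : ⌊α + β - 1⌋ = ⌊α * ((1 : ℤ) : ℝ) + β⌋ - 1 := by simp [Int.floor_sub_one]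
  rw [Finset.mem_Ioc, Finset.mem_Icc, hM₀, Int.sub_one_lt_iff, ← Int.cast_natCast N,
    hmono.le_iff_le, hmono.le_iff_le]

theorem beatty_char_sum_eq_filtered_sum_general (α β : ℝ) (hα1 : 1 < α)
    (k : ℕ) (χ : DirichletCharacter ℂ k) (N : ℕ) :
    ∑ n ∈ Finset.Icc 1 N, χ ((⌊α * n + β⌋ : ℤ) : ZMod k) =
      ∑ m ∈ (Finset.Ioc ⌊α + β - 1⌋ ⌊α * N + β⌋).filter
          (fun m : ℤ => 0 < Int.fract (α⁻¹ * (m : ℝ) + α⁻¹ * (1 - β)) ∧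
            Int.fract (α⁻¹ * (m : ℝ) + α⁻¹ * (1 - β)) ≤ α⁻¹),
        χ ((m : ℤ) : ZMod k) := by
  have hwindow := floor_mul_add_mem_Ioc_iff hα1.le β N
  refine Finset.sum_bij (fun n _ => ⌊α * n + β⌋) (fun n hn => ?_) (fun a _ b _ h => ?_)
    (fun m hm => ?_) (fun _ _ => rfl)
  · rw [Finset.mem_filter, ← Set.mem_Ioc, ← exists_floor_mul_add_eq_iff hα1]
    exact ⟨by simpa using (hwindow n).2 (by simpa using hn), n, by simp⟩
  · exact Int.ofNat_inj.1 <| (strictMono_floor_mul_add hα1.le β).injective <| by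
      simpa only [Int.cast_natCast] using h
  · rw [Finset.mem_filter, ← Set.mem_Ioc, ← exists_floor_mul_add_eq_iff hα1] at hm
    obtain ⟨hm, n, rfl⟩ := hm
    have hn := Finset.mem_Icc.1 ((hwindow n).1 hm)
    lift n to ℕ using by omega
    exact ⟨n, Finset.mem_Icc.2 (by exact_mod_cast hn), by simp⟩

/-- For irrational `α > 1`, with `γ = α⁻¹`, `δ = α⁻¹(1 − β)`, `M₀ = ⌊α + β − 1⌋` and
`M = ⌊α N + β⌋`, the Beatty character sum `∑_{n ≤ N} χ(⌊α n + β⌋)` equals the sum of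
`χ(m)` over the integers `M₀ < m ≤ M` with `0 < {γ m + δ} ≤ γ`. -/
theorem beatty_char_sum_eq_filtered_sum (α β : ℝ) (hα1 : 1 < α) (hα : Irrational α)
    (k : ℕ) (hk : 0 < k) (χ : DirichletCharacter ℂ k) (N : ℕ) (hN : 0 < N) :
    ∑ n ∈ Finset.Icc 1 N, χ ((⌊α * n + β⌋ : ℤ) : ZMod k) =
      ∑ m ∈ (Finset.Ioc ⌊α + β - 1⌋ ⌊α * N + β⌋).filter
          (fun m : ℤ => 0 < Int.fract (α⁻¹ * (m : ℝ) + α⁻¹ * (1 - β)) ∧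
            Int.fract (α⁻¹ * (m : ℝ) + α⁻¹ * (1 - β)) ≤ α⁻¹),
        χ ((m : ℤ) : ZMod k) :=
  beatty_char_sum_eq_filtered_sum_general α β hα1 k χ N
end
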